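/- arXiv:2601.06351 — 3 statements merged into one kernel-verified Lean document; each statement's English description precedes it below -/
import Mathlib

section
/- Let N, K₁, K₂ be positive integers. Partition a set of N objects into K₁ parts whose sizes differ pairwise by at most one, then partition each part into K₂ subparts whose sizes (within that part) differ pairwise by at most one. Then every resulting subpart has size ⌊N/(K₁K₂)⌋ or ⌈N/(K₁K₂)⌉. -/
open Finset

/-- A balanced family summing to `n` has each value between `n / K` and `n ⌈/⌉ K`. -/
lemma bal_bounds {K : ℕ} (hK : 0 < K) (a : Fin K → ℕ) (n : ℕ)
    (hsum : ∑ i, a i = n) (hbal : ∀ i i', a i ≤ a i' + 1) (i : Fin K) :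
    n / K ≤ a i ∧ a i ≤ n ⌈/⌉ K := by
  have hmem : i ∈ (univ : Finset (Fin K)) := mem_univ i
  have hsplit : a i + ∑ i' ∈ univ.erase i, a i' = n := by
    rw [Finset.add_sum_erase _ _ hmem, hsum]
  have hcard : (univ.erase i).card = K - 1 := by
    rw [Finset.card_erase_of_mem hmem, Finset.card_univ, Fintype.card_fin]
  -- upper bound on the rest: each term ≤ a i + 1
  have hup : ∑ i' ∈ univ.erase i, a i' ≤ (K - 1) * (a i + 1) := by
    calc ∑ i' ∈ univ.erase i, a i' ≤ ∑ _i' ∈ univ.erase i, (a i + 1) :=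
          Finset.sum_le_sum fun i' _ => hbal i' i
      _ = (K - 1) * (a i + 1) := by rw [Finset.sum_const, hcard, smul_eq_mul]
  -- lower bound on the rest: each term ≥ a i - 1, i.e. a i ≤ term + 1
  have hlo : (K - 1) * a i ≤ ∑ i' ∈ univ.erase i, (a i' + 1) := by
    calc (K - 1) * a i = ∑ _i' ∈ univ.erase i, a i := by
          rw [Finset.sum_const, hcard, smul_eq_mul]
      _ ≤ ∑ i' ∈ univ.erase i, (a i' + 1) := Finset.sum_le_sum fun i' _ => hbal i i'
  have hlo' : (K - 1) * a i ≤ (∑ i' ∈ univ.erase i, a i') + (K - 1) := by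
    rw [Finset.sum_add_distrib, Finset.sum_const, hcard, smul_eq_mul, mul_one] at hlo
    exact hlo
  constructor
  · -- n / K ≤ a i
    have h1 : n ≤ K * a i + (K - 1) := by
      have : n ≤ a i + (K - 1) * (a i + 1) := by omega
      have hK1 : K - 1 + 1 = K := Nat.succ_pred_eq_of_pos hK
      nlinarith [Nat.sub_add_cancel hK]
    have hlt : n < (a i + 1) * K := by
      have := Nat.sub_add_cancel hK
      nlinarith
    have := (Nat.div_lt_iff_lt_mul hK).2 hlt
    omega
  · -- a i ≤ n ⌈/⌉ K
    have h2 : K * a i ≤ n + (K - 1) := by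
      have hsub : (K - 1) * a i ≤ (n - a i) + (K - 1) := by omega
      have hle : a i ≤ n := by omega
      have := Nat.sub_add_cancel hK
      nlinarith [Nat.sub_add_cancel hle]
    rw [Nat.ceilDiv_eq_add_pred_div, Nat.le_div_iff_mul_le hK]
    have hc : a i * K = K * a i := Nat.mul_comm _ _
    have := Nat.sub_add_cancel hK
    omega
  
lemma ceilDiv_ceilDiv (n k₁ k₂ : ℕ) (h₁ : 0 < k₁) (h₂ : 0 < k₂) :
    (n ⌈/⌉ k₁) ⌈/⌉ k₂ = n ⌈/⌉ (k₁ * k₂) := by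
  have h₁₂ : 0 < k₁ * k₂ := Nat.mul_pos h₁ h₂
  apply le_antisymm
  · rw [ceilDiv_le_iff_le_smul h₂, ceilDiv_le_iff_le_smul h₁]
    have := le_smul_ceilDiv (b := n) h₁₂
    simpa [smul_eq_mul, mul_assoc] using this
  · rw [ceilDiv_le_iff_le_smul h₁₂]
    have ha := le_smul_ceilDiv (b := n) h₁
    have hb := le_smul_ceilDiv (b := n ⌈/⌉ k₁) h₂
    simp only [smul_eq_mul] at *
    calc n ≤ k₁ * (n ⌈/⌉ k₁) := ha
      _ ≤ k₁ * (k₂ * ((n ⌈/⌉ k₁) ⌈/⌉ k₂)) := Nat.mul_le_mul_left _ hb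
      _ = k₁ * k₂ * ((n ⌈/⌉ k₁) ⌈/⌉ k₂) := by ring

lemma ceilDiv_le_div_add_one (n k : ℕ) (hk : 0 < k) :
    n ⌈/⌉ k ≤ n / k + 1 := by
  rw [Nat.ceilDiv_eq_add_pred_div]
  calc (n + k - 1) / k ≤ (n + k) / k := Nat.div_le_div_right (by omega)
    _ = n / k + 1 := Nat.add_div_right n hk

theorem balanced_partition_compose
    (N K₁ K₂ : ℕ) (hN : 0 < N) (hK₁ : 0 < K₁) (hK₂ : 0 < K₂)
    (a : Fin K₁ → ℕ) (hasum : ∑ i, a i = N)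
    (habal : ∀ i i', a i ≤ a i' + 1)
    (b : Fin K₁ → Fin K₂ → ℕ)
    (hbsum : ∀ i, ∑ j, b i j = a i)
    (hbbal : ∀ i, ∀ j j', b i j ≤ b i j' + 1) :
    ∀ i j, b i j = N / (K₁ * K₂) ∨ b i j = N ⌈/⌉ (K₁ * K₂) := by
  intro i j
  obtain ⟨haF, haC⟩ := bal_bounds hK₁ a N hasum habal i
  obtain ⟨hbF, hbC⟩ := bal_bounds hK₂ (b i) (a i) (hbsum i) (hbbal i) j
  -- lower bound
  have hlow : N / (K₁ * K₂) ≤ b i j := by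
    calc N / (K₁ * K₂) = N / K₁ / K₂ := (Nat.div_div_eq_div_mul N K₁ K₂).symm
      _ ≤ a i / K₂ := Nat.div_le_div_right haF
      _ ≤ b i j := hbF
  -- upper bound
  have hmono : a i ⌈/⌉ K₂ ≤ (N ⌈/⌉ K₁) ⌈/⌉ K₂ := by
    rw [Nat.ceilDiv_eq_add_pred_div, Nat.ceilDiv_eq_add_pred_div]
    exact Nat.div_le_div_right (by omega)
  have hhigh : b i j ≤ N ⌈/⌉ (K₁ * K₂) := by
    calc b i j ≤ a i ⌈/⌉ K₂ := hbC
      _ ≤ (N ⌈/⌉ K₁) ⌈/⌉ K₂ := hmono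
      _ = N ⌈/⌉ (K₁ * K₂) := ceilDiv_ceilDiv N K₁ K₂ hK₁ hK₂
  have hgap : N ⌈/⌉ (K₁ * K₂) ≤ N / (K₁ * K₂) + 1 :=
    ceilDiv_le_div_add_one N (K₁ * K₂) (Nat.mul_pos hK₁ hK₂)
  have hfc : N / (K₁ * K₂) ≤ N ⌈/⌉ (K₁ * K₂) := by
    calc N / (K₁ * K₂) ≤ b i j := hlow
      _ ≤ N ⌈/⌉ (K₁ * K₂) := hhigh
  omega
end

section
/- For positive integers n and k with k ≤ n, if a is a part size in a balanced partition (i.e., a ∈ {⌊n/k⌋, ⌈n/k⌉}) and b ∈ {⌊a/m⌋, ⌈a/m⌉} for a positive integer m, then b ∈ {⌊n/(km)⌋, ⌈n/(km)⌉}. -/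
/-! Since `⌈n/d⌉ ≤ ⌊n/d⌋ + 1`, being one of the two part sizes of `n` over `d` just means lying
between `⌊n/d⌋` and `⌈n/d⌉`. Floor and ceiling division are monotone in the numerator and each
composes with itself (`⌊⌊n/k⌋/m⌋ = ⌊n/(km)⌋`, `⌈⌈n/k⌉/m⌉ = ⌈n/(km)⌉`), so the interval for `b`
lies inside the interval for `n/(km)`. -/

namespace Nat

lemma ceilDiv_le_div_add_one (n d : ℕ) : n ⌈/⌉ d ≤ n / d + 1 := by
  rcases Nat.eq_zero_or_pos d with rfl | hd
  · simp
  · rw [ceilDiv_le_iff_le_mul hd]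
    exact (Nat.lt_mul_div_succ n hd).le

lemma ceilDiv_mono_left (d : ℕ) : Monotone (· ⌈/⌉ d : ℕ → ℕ) := by
  rcases Nat.eq_zero_or_pos d with rfl | hd
  · intro _ _ _
    simp
  · exact (gc_mul_ceilDiv hd).monotone_l

lemma ceilDiv_ceilDiv (n k m : ℕ) : n ⌈/⌉ k ⌈/⌉ m = n ⌈/⌉ (k * m) := by
  rcases Nat.eq_zero_or_pos k with rfl | hk
  · simp
  rcases Nat.eq_zero_or_pos m with rfl | hm
  · simp
  exact eq_of_forall_ge_iff fun c ↦ by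
    rw [ceilDiv_le_iff_le_mul hm, ceilDiv_le_iff_le_mul hk,
      ceilDiv_le_iff_le_mul (Nat.mul_pos hk hm), Nat.mul_assoc]

lemma eq_div_or_eq_ceilDiv_iff {n d x : ℕ} :
    x = n / d ∨ x = n ⌈/⌉ d ↔ n / d ≤ x ∧ x ≤ n ⌈/⌉ d := by
  have hfloor : n / d ≤ n ⌈/⌉ d := floorDiv_le_ceilDiv (a := d) (b := n)
  have hceil := ceilDiv_le_div_add_one n d
  omega

end Nat

theorem balanced_split_size_compose_general
    (n k m : ℕ)
    (a b : ℕ)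
    (ha : a = n / k ∨ a = n ⌈/⌉ k)
    (hb : b = a / m ∨ b = a ⌈/⌉ m) :
    b = n / (k * m) ∨ b = n ⌈/⌉ (k * m) := by
  obtain ⟨ha_lo, ha_hi⟩ := Nat.eq_div_or_eq_ceilDiv_iff.mp ha
  obtain ⟨hb_lo, hb_hi⟩ := Nat.eq_div_or_eq_ceilDiv_iff.mp hb
  refine Nat.eq_div_or_eq_ceilDiv_iff.mpr ⟨?_, ?_⟩
  · calc n / (k * m) = n / k / m := (Nat.div_div_eq_div_mul n k m).symm
      _ ≤ a / m := Nat.div_le_div_right ha_lo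
      _ ≤ b := hb_lo
  · calc b ≤ a ⌈/⌉ m := hb_hi
      _ ≤ n ⌈/⌉ k ⌈/⌉ m := Nat.ceilDiv_mono_left m ha_hi
      _ = n ⌈/⌉ (k * m) := Nat.ceilDiv_ceilDiv n k m

theorem balanced_split_size_compose
    (n k m : ℕ) (hn : 0 < n) (hk : 0 < k) (hm : 0 < m) (hkn : k ≤ n)
    (a b : ℕ)
    (ha : a = n / k ∨ a = n ⌈/⌉ k)
    (hb : b = a / m ∨ b = a ⌈/⌉ m) :
    b = n / (k * m) ∨ b = n ⌈/⌉ (k * m) :=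
  balanced_split_size_compose_general n k m a b ha hb
end

section
/- If all K anticlusters in a partition of X ⊆ ℝ^D have the same size n (so |X| = Kn), then the anticlustering objective ∑_k ∑_{i<i', i,i'∈C_k} ‖x_i − x_{i'}‖² equals n·∑_{x∈X} ‖x − μ‖² − n·∑_{k=1}^K n‖μ_k − μ‖², where μ is the global centroid and μ_k are the anticluster centroids. Hence, for equal-sized anticlusters, maximizing the within-anticluster diversity is equivalent to minimizing ∑_k ‖μ_k − μ‖². -/
/-!
For a block `s` with centroid `c`, expanding `‖(x i - c) - (x j - c)‖²` and using
`∑ i ∈ s, (x i - c) = 0` gives `∑ i ∈ s, ∑ j ∈ s, ‖x i - x j‖² = 2 #s ∑ i ∈ s, ‖x i - c‖²`, and the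
parallel-axis identity gives `∑ i ∈ s, ‖x i - μ‖² = ∑ i ∈ s, ‖x i - c‖² + #s ‖c - μ‖²` for any `μ`.
Hence each block contributes `n ∑ i ∈ s, ‖x i - μ‖² - n² ‖c - μ‖²`, and summing over a partition of
the index set turns the first terms into `n ∑ i, ‖x i - μ‖²`, which does not depend on the partition.
-/

open Finset

/-- Sum of squared distances over unordered pairs within a finset of indices. -/
noncomputable def withinSum {N D : ℕ} (x : Fin N → EuclideanSpace ℝ (Fin D))
    (s : Finset (Fin N)) : ℝ :=
  ∑ i ∈ s, ∑ j ∈ s.filter (fun j => i < j), ‖x i - x j‖ ^ 2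

section PairSums

variable {ι M : Type*} [LinearOrder ι] [AddCommMonoid M]

lemma Finset.sum_sum_eq_two_nsmul_sum_sum_lt {f : ι → ι → M}
    (hsymm : ∀ i j, f i j = f j i) (hdiag : ∀ i, f i i = 0) (s : Finset ι) :
    ∑ i ∈ s, ∑ j ∈ s, f i j = 2 • ∑ i ∈ s, ∑ j ∈ s with i < j, f i j := by
  have hsplit : ∀ i ∈ s, ∑ j ∈ s, f i j
      = ∑ j ∈ s with i < j, f i j + ∑ j ∈ s with j < i, f i j := by
    intro i hi
    rw [← sum_filter_add_sum_filter_not s (fun j => i < j)]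
    congr 1
    have hnot : s.filter (fun j => ¬ i < j) = insert i (s.filter (fun j => j < i)) := by
      ext j
      simp only [mem_filter, mem_insert, not_lt]
      constructor
      · rintro ⟨hj, hji⟩
        exact hji.lt_or_eq.elim (fun h => Or.inr ⟨hj, h⟩) Or.inl
      · rintro (rfl | ⟨hj, hji⟩)
        exacts [⟨hi, le_rfl⟩, ⟨hj, hji.le⟩]
    rw [hnot, sum_insert (by simp), hdiag, zero_add]
  have hswap : ∑ i ∈ s, ∑ j ∈ s with j < i, f i j = ∑ i ∈ s, ∑ j ∈ s with i < j, f i j := by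
    simp_rw [sum_filter]
    rw [sum_comm]
    simp_rw [hsymm]
  rw [sum_congr rfl hsplit, sum_add_distrib, hswap, two_nsmul]

end PairSums

section Centroid

variable {ι E : Type*} [NormedAddCommGroup E] [InnerProductSpace ℝ E]
  {x : ι → E} {s : Finset ι} {c : E}

lemma Finset.sum_sub_eq_zero_of_sum_eq_card_smul (hc : ∑ i ∈ s, x i = (#s : ℝ) • c) :
    ∑ i ∈ s, (x i - c) = 0 := by
  rw [sum_sub_distrib, hc, sum_const, Nat.cast_smul_eq_nsmul, sub_self]

lemma Finset.sum_sum_norm_sub_sq_of_sum_eq_zero (hx : ∑ i ∈ s, x i = 0) :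
    ∑ i ∈ s, ∑ j ∈ s, ‖x i - x j‖ ^ 2 = 2 * #s * ∑ i ∈ s, ‖x i‖ ^ 2 := by
  simp only [norm_sub_sq_real, sum_add_distrib, sum_sub_distrib, sum_const, nsmul_eq_mul,
    ← mul_sum, ← inner_sum, ← sum_inner, hx, inner_zero_left, mul_zero]
  ring

lemma Finset.sum_sum_norm_sub_sq_eq_of_centroid (hc : ∑ i ∈ s, x i = (#s : ℝ) • c) :
    ∑ i ∈ s, ∑ j ∈ s, ‖x i - x j‖ ^ 2 = 2 * #s * ∑ i ∈ s, ‖x i - c‖ ^ 2 := by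
  rw [← sum_sum_norm_sub_sq_of_sum_eq_zero (sum_sub_eq_zero_of_sum_eq_card_smul hc)]
  simp only [sub_sub_sub_cancel_right]

lemma Finset.sum_norm_sub_sq_eq_of_centroid (hc : ∑ i ∈ s, x i = (#s : ℝ) • c) (μ : E) :
    ∑ i ∈ s, ‖x i - μ‖ ^ 2 = ∑ i ∈ s, ‖x i - c‖ ^ 2 + #s * ‖c - μ‖ ^ 2 := by
  calc ∑ i ∈ s, ‖x i - μ‖ ^ 2
      = ∑ i ∈ s, (‖x i - c‖ ^ 2 + 2 * inner ℝ (x i - c) (c - μ) + ‖c - μ‖ ^ 2) := by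
        refine sum_congr rfl fun i _ => ?_
        rw [← norm_add_sq_real, sub_add_sub_cancel]
    _ = ∑ i ∈ s, ‖x i - c‖ ^ 2 + #s * ‖c - μ‖ ^ 2 := by
        rw [sum_add_distrib, sum_add_distrib, ← mul_sum, ← sum_inner,
          sum_sub_eq_zero_of_sum_eq_card_smul hc]
        simp

end Centroid

lemma withinSum_eq_of_centroid {N D : ℕ} {x : Fin N → EuclideanSpace ℝ (Fin D)}
    {s : Finset (Fin N)} {c : EuclideanSpace ℝ (Fin D)} (hc : ∑ i ∈ s, x i = (#s : ℝ) • c)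
    (μ : EuclideanSpace ℝ (Fin D)) :
    withinSum x s = #s * ∑ i ∈ s, ‖x i - μ‖ ^ 2 - #s * (#s * ‖c - μ‖ ^ 2) := by
  have hpairs := sum_sum_eq_two_nsmul_sum_sum_lt (f := fun i j => ‖x i - x j‖ ^ 2)
    (fun i j => by rw [norm_sub_rev]) (fun i => by simp) s
  rw [sum_sum_norm_sub_sq_eq_of_centroid hc, two_nsmul, ← two_mul] at hpairs
  rw [sum_norm_sub_sq_eq_of_centroid hc μ, withinSum]
  linarith

lemma Finset.sum_eq_sum_sum_of_partition {ι κ M : Type*} [Fintype ι] [Fintype κ] [DecidableEq ι]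
    [AddCommMonoid M] {P : κ → Finset ι} (hdisj : ∀ k k', k ≠ k' → Disjoint (P k) (P k'))
    (hcover : ∀ i, ∃ k, i ∈ P k) (f : ι → M) :
    ∑ i, f i = ∑ k, ∑ i ∈ P k, f i := by
  have hunion : univ.biUnion P = univ :=
    eq_univ_of_forall fun i => mem_biUnion.2 <| (hcover i).imp fun k hk => ⟨mem_univ k, hk⟩
  rw [← hunion, sum_biUnion fun k _ k' _ => hdisj k k']

lemma sum_withinSum_eq_of_partition {D K n : ℕ} (hn : 0 < n)
    (x : Fin (K * n) → EuclideanSpace ℝ (Fin D)) (μ : EuclideanSpace ℝ (Fin D))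
    {P : Fin K → Finset (Fin (K * n))} (hdisj : ∀ k k', k ≠ k' → Disjoint (P k) (P k'))
    (hcover : ∀ i, ∃ k, i ∈ P k) (hcard : ∀ k, #(P k) = n)
    {μP : Fin K → EuclideanSpace ℝ (Fin D)} (hμP : ∀ k, μP k = (n : ℝ)⁻¹ • ∑ i ∈ P k, x i) :
    ∑ k, withinSum x (P k)
      = (n : ℝ) * ∑ i, ‖x i - μ‖ ^ 2 - (n : ℝ) * ∑ k, (n : ℝ) * ‖μP k - μ‖ ^ 2 := by
  have hcentroid : ∀ k, ∑ i ∈ P k, x i = (#(P k) : ℝ) • μP k := fun k => by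
    rw [hμP, hcard, smul_inv_smul₀ (Nat.cast_ne_zero.2 hn.ne')]
  simp_rw [withinSum_eq_of_centroid (hcentroid _) μ, hcard]
  rw [sum_sub_distrib, ← mul_sum, ← mul_sum, sum_eq_sum_sum_of_partition hdisj hcover]

theorem equal_size_anticlustering_objective_general
    (D K n : ℕ) (hn : 0 < n)
    (x : Fin (K * n) → EuclideanSpace ℝ (Fin D))
    (μ : EuclideanSpace ℝ (Fin D))
    (P : Fin K → Finset (Fin (K * n)))
    (hPdisj : ∀ k k', k ≠ k' → Disjoint (P k) (P k'))
    (hPcover : ∀ i, ∃ k, i ∈ P k)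
    (hPcard : ∀ k, (P k).card = n)
    (μP : Fin K → EuclideanSpace ℝ (Fin D))
    (hμP : ∀ k, μP k = (n : ℝ)⁻¹ • ∑ i ∈ P k, x i) :
    (∑ k, withinSum x (P k)
      = (n : ℝ) * ∑ i, ‖x i - μ‖ ^ 2 - (n : ℝ) * ∑ k, (n : ℝ) * ‖μP k - μ‖ ^ 2) ∧
    (∀ Q : Fin K → Finset (Fin (K * n)),
      (∀ k k', k ≠ k' → Disjoint (Q k) (Q k')) →
      (∀ i, ∃ k, i ∈ Q k) →
      (∀ k, (Q k).card = n) →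
      ∀ μQ : Fin K → EuclideanSpace ℝ (Fin D),
        (∀ k, μQ k = (n : ℝ)⁻¹ • ∑ i ∈ Q k, x i) →
        ((∑ k, withinSum x (Q k) ≤ ∑ k, withinSum x (P k)) ↔
          (∑ k, ‖μP k - μ‖ ^ 2 ≤ ∑ k, ‖μQ k - μ‖ ^ 2))) := by
  have hP := sum_withinSum_eq_of_partition hn x μ hPdisj hPcover hPcard hμP
  refine ⟨hP, fun Q hQdisj hQcover hQcard μQ hμQ => ?_⟩
  have hnpos : (0 : ℝ) < n := Nat.cast_pos.2 hn
  rw [sum_withinSum_eq_of_partition hn x μ hQdisj hQcover hQcard hμQ, hP, ← mul_sum, ← mul_sum,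
    sub_le_sub_iff_left, mul_le_mul_iff_right₀ hnpos, mul_le_mul_iff_right₀ hnpos]

theorem equal_size_anticlustering_objective
    (D K n : ℕ) (hK : 0 < K) (hn : 0 < n)
    (x : Fin (K * n) → EuclideanSpace ℝ (Fin D))
    (μ : EuclideanSpace ℝ (Fin D)) (hμ : μ = ((K * n : ℕ) : ℝ)⁻¹ • ∑ i, x i)
    (P : Fin K → Finset (Fin (K * n)))
    (hPdisj : ∀ k k', k ≠ k' → Disjoint (P k) (P k'))
    (hPcover : ∀ i, ∃ k, i ∈ P k)
    (hPcard : ∀ k, (P k).card = n)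
    (μP : Fin K → EuclideanSpace ℝ (Fin D))
    (hμP : ∀ k, μP k = (n : ℝ)⁻¹ • ∑ i ∈ P k, x i) :
    (∑ k, withinSum x (P k)
      = (n : ℝ) * ∑ i, ‖x i - μ‖ ^ 2 - (n : ℝ) * ∑ k, (n : ℝ) * ‖μP k - μ‖ ^ 2) ∧
    (∀ Q : Fin K → Finset (Fin (K * n)),
      (∀ k k', k ≠ k' → Disjoint (Q k) (Q k')) →
      (∀ i, ∃ k, i ∈ Q k) →
      (∀ k, (Q k).card = n) →
      ∀ μQ : Fin K → EuclideanSpace ℝ (Fin D),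
        (∀ k, μQ k = (n : ℝ)⁻¹ • ∑ i ∈ Q k, x i) →
        ((∑ k, withinSum x (Q k) ≤ ∑ k, withinSum x (P k)) ↔
          (∑ k, ‖μP k - μ‖ ^ 2 ≤ ∑ k, ‖μQ k - μ‖ ^ 2))) :=
  equal_size_anticlustering_objective_general D K n hn x μ P hPdisj hPcover hPcard μP hμP
end
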